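/- Let f = x⁴ + y⁴ + z⁴ + x²y²z² in ℚ[x,y,z]. The derivation θ₆ = (−(1/32)x²y⁵z² − (1/16)x⁴y³ − (1/16)y³z⁴ − (1/8)x²yz² − (1/4)y³)·∂x + (−(1/32)xy⁶z² − (1/16)x³y⁴ + (1/8)xy²z² + (1/4)x³)·∂y satisfies θ₆(f) = −((1/8)xy⁵z² + (1/4)x³y³)·f; in particular θ₆ is a logarithmic derivation with respect to the divisor D = (f = 0). -/
import Mathlib


open MvPolynomial

noncomputable section

/-- The polynomial ring ℚ[x,y,z]. -/
abbrev R3 : Type := MvPolynomial (Fin 3) ℚ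

def x : R3 := X 0
def y : R3 := X 1
def z : R3 := X 2

/-- f = x⁴ + y⁴ + z⁴ + x²y²z². -/
def f : R3 := x ^ 4 + y ^ 4 + z ^ 4 + x ^ 2 * y ^ 2 * z ^ 2

/-- θ₆ = (−(1/32)x²y⁵z² − (1/16)x⁴y³ − (1/16)y³z⁴ − (1/8)x²yz² − (1/4)y³)·∂x
        + (−(1/32)xy⁶z² − (1/16)x³y⁴ + (1/8)xy²z² + (1/4)x³)·∂y. -/
def θ₆ : Derivation ℚ R3 R3 :=
  mkDerivation ℚ
    ![-(C (1/32 : ℚ) * x ^ 2 * y ^ 5 * z ^ 2) - C (1/16 : ℚ) * x ^ 4 * y ^ 3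
        - C (1/16 : ℚ) * y ^ 3 * z ^ 4 - C (1/8 : ℚ) * x ^ 2 * y * z ^ 2
        - C (1/4 : ℚ) * y ^ 3,
      -(C (1/32 : ℚ) * x * y ^ 6 * z ^ 2) - C (1/16 : ℚ) * x ^ 3 * y ^ 4
        + C (1/8 : ℚ) * x * y ^ 2 * z ^ 2 + C (1/4 : ℚ) * x ^ 3,
      0]

theorem theta6_logarithmic :
    θ₆ f = -(C (1/8 : ℚ) * x * y ^ 5 * z ^ 2 + C (1/4 : ℚ) * x ^ 3 * y ^ 3) * f ∧
      ∃ a : R3, θ₆ f = a * f := by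
  have h : θ₆ f = -(C (1/8 : ℚ) * x * y ^ 5 * z ^ 2 + C (1/4 : ℚ) * x ^ 3 * y ^ 3) * f := by
    simp only [f, θ₆, x, y, z, map_add, Derivation.leibniz, Derivation.leibniz_pow,
      mkDerivation_X, Matrix.cons_val_zero, Matrix.cons_val_one, Matrix.head_cons,
      Matrix.cons_val_two, Matrix.tail_cons, smul_eq_mul, nsmul_eq_mul, Nat.cast_ofNat]
    have e16 : (C (1/16 : ℚ) : R3) = 2 * C (1/32) := by
      rw [show ((2:R3) = C (2:ℚ)) from (map_ofNat C 2).symm, ← C_mul]; norm_num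
    have e8 : (C (1/8 : ℚ) : R3) = 4 * C (1/32) := by
      rw [show ((4:R3) = C (4:ℚ)) from (map_ofNat C 4).symm, ← C_mul]; norm_num
    have e4 : (C (1/4 : ℚ) : R3) = 8 * C (1/32) := by
      rw [show ((8:R3) = C (8:ℚ)) from (map_ofNat C 8).symm, ← C_mul]; norm_num
    rw [e16, e8, e4]
    ring
  exact ⟨h, _, h⟩

end
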